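/- arXiv:2210.10125 — 2 statements merged into one kernel-verified Lean document; each statement's English description precedes it below -/
import Mathlib

section
/- Let S, A₁, A₂ be types with a policy for agent i being a function S → PMF(Aᵢ) (a map from states to probability mass functions over actions). Let π¹ : ℝⁿ → (S → PMF A₁) and π² : ℝᵐ → (S → PMF A₂) be parameterization maps, let L¹, L² : (S → PMF A₁) → (S → PMF A₂) → ℝ be loss functionals, let D¹ : (S → PMF A₁) → (S → PMF A₁) → ℝ and D² : (S → PMF A₂) → (S → PMF A₂) → ℝ be divergence functionals, and let β_in, β_out ∈ ℝ. Suppose: (i) for every θ¹'' ∈ ℝⁿ and θ² ∈ ℝᵐ, the inner objective θ²'' ↦ L²(π¹(θ¹''), π²(θ²'')) + β_in · D²(π²(θ²), π²(θ²'')) has a unique global minimizer θ²'(θ¹'', θ²) ∈ ℝᵐ; and (ii) for every θ¹ ∈ ℝⁿ and θ² ∈ ℝᵐ, the outer objective θ¹'' ↦ L¹(π¹(θ¹''), π²(θ²'(θ¹'', θ²))) + β_out · D¹(π¹(θ¹), π¹(θ¹'')) has a unique global minimizer u(θ¹, θ²) ∈ ℝⁿ. Then the POLA update rule u is invariant to policy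 parameterization: for all θ^{1a}, θ^{1b} ∈ ℝⁿ and θ^{2a}, θ^{2b} ∈ ℝᵐ such that π¹(θ^{1a}) = π¹(θ^{1b}) and π²(θ^{2a}) = π²(θ^{2b}), it holds that π¹(u(θ^{1a}, θ^{2a})) = π¹(u(θ^{1b}, θ^{2b})). -/
/-! Both proximal objectives depend on the parameters only through the policies they induce.
Equivalent starting parameters therefore give the same inner objective, hence the same inner
best response, hence the same outer objective; a strict global minimizer is unique, so the
outer updates coincide. -/

theorem strictMinimizer_unique {α β : Type*} [Preorder β] {f : α → β} {a b : α}
    (ha : ∀ x, x ≠ a → f a < f x) (hb : ∀ x, x ≠ b → f b < f x) : a = b := by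
  by_contra hab
  exact lt_asymm (ha b (Ne.symm hab)) (hb a hab)

/-- The ideal POLA update rule is invariant to policy parameterization: if the inner and
outer proximal objectives each have a unique global minimizer, then behaviourally
equivalent starting policies yield behaviourally equivalent updated policies. -/
theorem stmt_1 {n m : ℕ} {S A₁ A₂ : Type*}
    (π1 : (Fin n → ℝ) → S → PMF A₁) (π2 : (Fin m → ℝ) → S → PMF A₂)
    (L1 : (S → PMF A₁) → (S → PMF A₂) → ℝ)
    (L2 : (S → PMF A₁) → (S → PMF A₂) → ℝ)
    (D1 : (S → PMF A₁) → (S → PMF A₁) → ℝ)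
    (D2 : (S → PMF A₂) → (S → PMF A₂) → ℝ)
    (βin βout : ℝ)
    (θ2' : (Fin n → ℝ) → (Fin m → ℝ) → (Fin m → ℝ))
    -- (i) θ2' θ1'' θ2 is the unique global minimizer of the inner objective
    (h_inner : ∀ θ1'' θ2, ∀ x, x ≠ θ2' θ1'' θ2 →
      L2 (π1 θ1'') (π2 (θ2' θ1'' θ2)) + βin * D2 (π2 θ2) (π2 (θ2' θ1'' θ2)) <
        L2 (π1 θ1'') (π2 x) + βin * D2 (π2 θ2) (π2 x))
    (u : (Fin n → ℝ) → (Fin m → ℝ) → (Fin n → ℝ))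
    -- (ii) u θ1 θ2 is the unique global minimizer of the outer objective
    (h_outer : ∀ θ1 θ2, ∀ x, x ≠ u θ1 θ2 →
      L1 (π1 (u θ1 θ2)) (π2 (θ2' (u θ1 θ2) θ2)) + βout * D1 (π1 θ1) (π1 (u θ1 θ2)) <
        L1 (π1 x) (π2 (θ2' x θ2)) + βout * D1 (π1 θ1) (π1 x)) :
    ∀ θ1a θ1b : Fin n → ℝ, ∀ θ2a θ2b : Fin m → ℝ,
      π1 θ1a = π1 θ1b → π2 θ2a = π2 θ2b →
      π1 (u θ1a θ2a) = π1 (u θ1b θ2b) := by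
  intro θ1a θ1b θ2a θ2b h1 h2
  have inner_eq (θ1'' : Fin n → ℝ) : θ2' θ1'' θ2a = θ2' θ1'' θ2b :=
    strictMinimizer_unique
      (f := fun x => L2 (π1 θ1'') (π2 x) + βin * D2 (π2 θ2b) (π2 x))
      (by simpa only [h2] using h_inner θ1'' θ2a) (h_inner θ1'' θ2b)
  have outer_eq : u θ1a θ2a = u θ1b θ2b :=
    strictMinimizer_unique
      (f := fun x => L1 (π1 x) (π2 (θ2' x θ2b)) + βout * D1 (π1 θ1b) (π1 x))
      (by simpa only [h1, inner_eq] using h_outer θ1a θ2a) (h_outer θ1b θ2b)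
  rw [outer_eq]
end

section
/- Let L¹ : ℝⁿ × ℝᵐ → ℝ and L² : ℝⁿ × ℝᵐ → ℝ, let λ > 0 and set β = 1/(2λ). Fix θ¹ ∈ ℝⁿ and θ² ∈ ℝᵐ. Assume that for every θ¹'' ∈ ℝⁿ the map θ ↦ L²(θ¹'', θ) is differentiable at θ², and define the inner update via the proximal operator on the first-order approximation of the inner objective with squared L2 parameter penalty: θ²'(θ¹'') = argmin_{θ²''} ( L²(θ¹'', θ²) + ⟪∇_{θ²}L²(θ¹'', θ²), θ²'' − θ²⟫ + β‖θ² − θ²''‖² ), so that θ²'(θ¹'') = θ² − λ∇_{θ²}L²(θ¹'', θ²). Define f¹(θ) = L¹(θ, θ²'(θ)) and assume f¹ is differentiable at θ¹. Then the POLA update with the divergence on policies replaced by the squared L2 norm on policy parameters and with first-order approximation of the outer objective, namely argmin_{θ¹''} ( f¹(θ¹) + ⟪∇f¹(θ¹), θ¹'' − θ¹⟫ + β‖θ¹ − θ¹''‖² ), has the unique minimizer θ¹ − λ∇f¹(θ¹), which is exactly the LOLA update θ¹ − λ∇_{θ¹} L¹(θ¹, θ² − λ∇_{θ²}L²(θ¹,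 θ²)). In other words, POLA reduces to LOLA when the divergence on policies is replaced by the L2 norm on policy parameters and first-order approximations of both agents' objectives are used. -/
/-!
With `β = 1 / (2λ)`, completing the square gives
`⟪g, x - θ⟫ + β ‖θ - x‖² = β ‖x - (θ - λ g)‖² - (λ / 2) ‖g‖²`,
so a linearised objective with squared-distance penalty is uniquely minimised by the gradient
step `θ - λ g`. Applied with `g = ∇_{θ²} L²(θ¹'', θ²)` this is the inner update, and applied
with `g = ∇f¹(θ¹)` it is the outer update, which is therefore the LOLA step.
-/

open scoped RealInnerProductSpace

section ProximalGradientStep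

variable {E : Type*} [NormedAddCommGroup E] [InnerProductSpace ℝ E]

theorem inner_sub_add_norm_sq_eq_norm_sub_gradientStep_sq {lam : ℝ} (hlam : lam ≠ 0)
    (g θ x : E) :
    ⟪g, x - θ⟫ + 1 / (2 * lam) * ‖θ - x‖ ^ 2 =
      1 / (2 * lam) * ‖x - (θ - lam • g)‖ ^ 2 - lam / 2 * ‖g‖ ^ 2 := by
  have hexpand : ‖x - (θ - lam • g)‖ ^ 2 =
      ‖θ - x‖ ^ 2 + 2 * lam * ⟪g, x - θ⟫ + lam ^ 2 * ‖g‖ ^ 2 := by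
    rw [show x - (θ - lam • g) = (x - θ) + lam • g by abel, norm_add_sq_real,
      real_inner_smul_right, norm_smul, Real.norm_eq_abs, mul_pow, sq_abs,
      real_inner_comm, norm_sub_rev]
    ring
  rw [hexpand]
  field_simp
  ring

theorem inner_sub_add_norm_sq_gradientStep_lt {lam : ℝ} (hlam : 0 < lam) (g θ : E) {x : E}
    (hx : x ≠ θ - lam • g) :
    ⟪g, (θ - lam • g) - θ⟫ + 1 / (2 * lam) * ‖θ - (θ - lam • g)‖ ^ 2 <
      ⟪g, x - θ⟫ + 1 / (2 * lam) * ‖θ - x‖ ^ 2 := by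
  have hdist : 0 < ‖x - (θ - lam • g)‖ := norm_pos_iff.mpr (sub_ne_zero.mpr hx)
  rw [inner_sub_add_norm_sq_eq_norm_sub_gradientStep_sq hlam.ne',
    inner_sub_add_norm_sq_eq_norm_sub_gradientStep_sq hlam.ne', sub_self, norm_zero]
  gcongr

theorem inner_sub_add_norm_sq_gradientStep_le {lam : ℝ} (hlam : 0 < lam) (g θ x : E) :
    ⟪g, (θ - lam • g) - θ⟫ + 1 / (2 * lam) * ‖θ - (θ - lam • g)‖ ^ 2 ≤
      ⟪g, x - θ⟫ + 1 / (2 * lam) * ‖θ - x‖ ^ 2 := by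
  rcases eq_or_ne x (θ - lam • g) with rfl | hx
  · rfl
  · exact (inner_sub_add_norm_sq_gradientStep_lt hlam g θ hx).le

end ProximalGradientStep

theorem stmt_5_general {n m : ℕ}
    (L1 L2 : EuclideanSpace ℝ (Fin n) → EuclideanSpace ℝ (Fin m) → ℝ)
    (lam β : ℝ) (hlam : 0 < lam) (hβ : β = 1 / (2 * lam))
    (θ1 : EuclideanSpace ℝ (Fin n)) (θ2 : EuclideanSpace ℝ (Fin m))
    (G2 : EuclideanSpace ℝ (Fin n) → EuclideanSpace ℝ (Fin m))
    (g1 : EuclideanSpace ℝ (Fin n)) :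
    -- inner: θ2 - lam • G2 θ1'' is the unique minimizer of the first-order inner
    -- objective with squared L2 parameter penalty
    (∀ θ1'' : EuclideanSpace ℝ (Fin n), ∀ y, y ≠ θ2 - lam • G2 θ1'' →
      L2 θ1'' θ2 + ⟪G2 θ1'', (θ2 - lam • G2 θ1'') - θ2⟫ +
          β * ‖θ2 - (θ2 - lam • G2 θ1'')‖ ^ 2 <
        L2 θ1'' θ2 + ⟪G2 θ1'', y - θ2⟫ + β * ‖θ2 - y‖ ^ 2) ∧
    -- outer: θ1 - lam • g1 is the unique minimizer of the first-order outer objective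
    -- with squared L2 parameter penalty, i.e. the LOLA update
    ((∀ x, L1 θ1 (θ2 - lam • G2 θ1) + ⟪g1, (θ1 - lam • g1) - θ1⟫ +
          β * ‖θ1 - (θ1 - lam • g1)‖ ^ 2 ≤
        L1 θ1 (θ2 - lam • G2 θ1) + ⟪g1, x - θ1⟫ + β * ‖θ1 - x‖ ^ 2) ∧
      (∀ x, x ≠ θ1 - lam • g1 →
        L1 θ1 (θ2 - lam • G2 θ1) + ⟪g1, (θ1 - lam • g1) - θ1⟫ +
            β * ‖θ1 - (θ1 - lam • g1)‖ ^ 2 <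
          L1 θ1 (θ2 - lam • G2 θ1) + ⟪g1, x - θ1⟫ + β * ‖θ1 - x‖ ^ 2)) := by
  subst hβ
  simp only [add_assoc]
  refine ⟨fun θ1'' y hy => ?_, fun x => ?_, fun x hx => ?_⟩
  · exact add_lt_add_right (inner_sub_add_norm_sq_gradientStep_lt hlam _ _ hy) _
  · exact add_le_add_right (inner_sub_add_norm_sq_gradientStep_le hlam _ _ x) _
  · exact add_lt_add_right (inner_sub_add_norm_sq_gradientStep_lt hlam _ _ hx) _

/-- POLA reduces to LOLA when the divergence on policies is replaced by the squared L2
norm on policy parameters and first-order approximations of both agents' objectives are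
used: the inner proximal update equals the naive gradient step
`θ2' θ1'' = θ2 - lam • ∇_{θ²} L2 θ1'' θ2`, and the outer proximal objective's unique
minimizer is `θ1 - lam • ∇f¹(θ1)` — exactly the LOLA update on
`f¹(θ) = L1 θ (θ2 - lam • ∇_{θ²} L2 θ θ2)`. -/
theorem stmt_5 {n m : ℕ}
    (L1 L2 : EuclideanSpace ℝ (Fin n) → EuclideanSpace ℝ (Fin m) → ℝ)
    (lam β : ℝ) (hlam : 0 < lam) (hβ : β = 1 / (2 * lam))
    (θ1 : EuclideanSpace ℝ (Fin n)) (θ2 : EuclideanSpace ℝ (Fin m))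
    -- the map θ ↦ L2 θ1'' θ is differentiable at θ2 with gradient G2 θ1''
    (G2 : EuclideanSpace ℝ (Fin n) → EuclideanSpace ℝ (Fin m))
    (hG2 : ∀ θ1'', HasGradientAt (fun θ => L2 θ1'' θ) (G2 θ1'') θ2)
    -- the LOLA modified objective f¹(θ) = L1 θ (θ2 - lam • G2 θ) has gradient g1 at θ1
    (g1 : EuclideanSpace ℝ (Fin n))
    (hf1 : HasGradientAt (fun θ => L1 θ (θ2 - lam • G2 θ)) g1 θ1) :
    -- inner: θ2 - lam • G2 θ1'' is the unique minimizer of the first-order inner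
    -- objective with squared L2 parameter penalty
    (∀ θ1'' : EuclideanSpace ℝ (Fin n), ∀ y, y ≠ θ2 - lam • G2 θ1'' →
      L2 θ1'' θ2 + ⟪G2 θ1'', (θ2 - lam • G2 θ1'') - θ2⟫ +
          β * ‖θ2 - (θ2 - lam • G2 θ1'')‖ ^ 2 <
        L2 θ1'' θ2 + ⟪G2 θ1'', y - θ2⟫ + β * ‖θ2 - y‖ ^ 2) ∧
    -- outer: θ1 - lam • g1 is the unique minimizer of the first-order outer objective
    -- with squared L2 parameter penalty, i.e. the LOLA update
    ((∀ x, L1 θ1 (θ2 - lam • G2 θ1) + ⟪g1, (θ1 - lam • g1) - θ1⟫ +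
          β * ‖θ1 - (θ1 - lam • g1)‖ ^ 2 ≤
        L1 θ1 (θ2 - lam • G2 θ1) + ⟪g1, x - θ1⟫ + β * ‖θ1 - x‖ ^ 2) ∧
      (∀ x, x ≠ θ1 - lam • g1 →
        L1 θ1 (θ2 - lam • G2 θ1) + ⟪g1, (θ1 - lam • g1) - θ1⟫ +
            β * ‖θ1 - (θ1 - lam • g1)‖ ^ 2 <
          L1 θ1 (θ2 - lam • G2 θ1) + ⟪g1, x - θ1⟫ + β * ‖θ1 - x‖ ^ 2)) :=
  stmt_5_general L1 L2 lam β hlam hβ θ1 θ2 G2 g1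
end
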